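/- arXiv:2105.00243 — 3 statements merged into one kernel-verified Lean document; each statement's English description precedes it below -/
import Mathlib

section
/- (Theorem 1: one-round deviation of FedProto.) Let H be a real Hilbert space, V a real normed space, m ≥ 1 and E ≥ 1 natural numbers, and fix constants L₁ ≥ 0, L₂ ≥ 0, η ≥ 0, σ² ≥ 0, G ≥ 0, λ ≥ 0. For each client j ≤ m let F_j : H → V be L₂-Lipschitz, let q_j ≥ 0 with Σ_j q_j = 1, and fix a client index i ≤ m and a function S_i : H → ℝ. For a prototype c ∈ V define client i's local loss L_i(w; c) = S_i(w) + λ·‖F_i(w) − c‖. Let (Ω, 𝓐, P) be a probability space with a filtration 𝓕₀ ⊆ … ⊆ 𝓕_E. Given deterministic initial parameters W_{j,0} ∈ H for every client j, let each client run E SGD steps W_{j,e+1} = W_{j,e} − η·g_{j,e}, where each g_{j,e} : Ω → H is square-integrable and 𝓕_{e+1}-measurable, and E[‖g_{j,e}‖] ≤ G for all j, e. Let c = Σ_j q_j·F_j(W_{j,0}) be the current global prototype, assume w ↦ L_i(w; c) is differentiable with L₁-Lipschitz gradient, and assume for every e < E that, almost surely, E[g_{i,e} | 𝓕_e] = ∇_w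 L_i(W_{i,e}; c) and E[‖g_{i,e} − ∇_w L_i(W_{i,e}; c)‖² | 𝓕_e] ≤ σ², with all relevant functions integrable. Let c′ = Σ_j q_j·F_j(W_{j,E}) be the newly aggregated global prototype. Then E[L_i(W_{i,E}; c′)] ≤ L_i(W_{i,0}; c) − (η − L₁η²/2)·Σ_{e=0}^{E−1} E[‖∇_w L_i(W_{i,e}; c)‖²] + (L₁·E·η²/2)·σ² + λ·L₂·η·E·G. -/
/-!
For `f = L_i(·; c)` the `L₁`-Lipschitz gradient makes
`t ↦ f(w + t d) - t ⟪∇f(w), d⟫ - L₁ t² ‖d‖² / 2` antitone on `[0, 1]`, which is the descent inequality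
`f(w - η g) ≤ f(w) - η ⟪∇f(w), g⟫ + L₁ η² ‖g‖² / 2`. In expectation, unbiasedness turns the cross
term into `E‖∇f(w)‖²` (pull-out property of the conditional expectation), and
`E‖g‖² = E‖g - ∇f(w)‖² + E‖∇f(w)‖² ≤ σ² + E‖∇f(w)‖²`; summing over the `E` local steps bounds
the expected loss at the old prototype `c`. Replacing `c` by `c'` costs at most `λ‖c' - c‖`, and
since every `F_j` is `L₂`-Lipschitz and client `j` moves by at most `η Σₑ ‖g_{j,e}‖`, the
expectation of this cost is at most `λ L₂ η E G`.
-/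

open MeasureTheory

open scoped RealInnerProductSpace

theorem le_add_inner_add_sq_of_hasGradientAt {H : Type*} [NormedAddCommGroup H]
    [InnerProductSpace ℝ H] [CompleteSpace H] {f : H → ℝ} {f' : H → H} {L : ℝ}
    (hf : ∀ w, HasGradientAt f (f' w) w) (hf' : ∀ x y, ‖f' x - f' y‖ ≤ L * ‖x - y‖) (x y : H) :
    f y ≤ f x + ⟪f' x, y - x⟫ + L / 2 * ‖y - x‖ ^ 2 := by
  set d := y - x with hd
  set φ : ℝ → ℝ := fun t => f (x + t • d) - t * ⟪f' x, d⟫ - L / 2 * t ^ 2 * ‖d‖ ^ 2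
  have hφ : ∀ t, HasDerivAt φ (⟪f' (x + t • d) - f' x, d⟫ - L * t * ‖d‖ ^ 2) t := by
    intro t
    have hline : HasDerivAt (fun t : ℝ => x + t • d) d t := by
      simpa using ((hasDerivAt_id t).smul_const d).const_add x
    have hcomp := (hf (x + t • d)).hasFDerivAt.comp_hasDerivAt t hline
    simp only [Function.comp_def, InnerProductSpace.toDual_apply_apply] at hcomp
    refine ((hcomp.sub ((hasDerivAt_id t).mul_const ⟪f' x, d⟫)).sub
      (((hasDerivAt_pow 2 t).const_mul (L / 2)).mul_const (‖d‖ ^ 2))).congr_deriv ?_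
    rw [inner_sub_left]
    push_cast
    ring
  have hanti : AntitoneOn φ (Set.Icc 0 1) := by
    refine antitoneOn_of_hasDerivWithinAt_nonpos (convex_Icc 0 1)
      (fun t _ => (hφ t).continuousAt.continuousWithinAt) (fun t _ => (hφ t).hasDerivWithinAt) ?_
    rintro t ht
    rw [interior_Icc] at ht
    have hgrad_sub : ‖f' (x + t • d) - f' x‖ * ‖d‖ ≤ L * t * ‖d‖ ^ 2 := by
      have := mul_le_mul_of_nonneg_right (hf' (x + t • d) x) (norm_nonneg d)
      rwa [add_sub_cancel_left, norm_smul, Real.norm_of_nonneg ht.1.le, ← mul_assoc,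
        mul_assoc _ _ ‖d‖, ← sq] at this
    linarith [real_inner_le_norm (f' (x + t • d) - f' x) d]
  have h01 : φ 1 ≤ φ 0 :=
    hanti (Set.left_mem_Icc.2 zero_le_one) (Set.right_mem_Icc.2 zero_le_one) zero_le_one
  norm_num [φ, hd] at h01
  linarith

namespace MeasureTheory

variable {H : Type*} [NormedAddCommGroup H] [InnerProductSpace ℝ H]
  {Ω : Type*} {m m0 : MeasurableSpace Ω} {P : Measure Ω}

theorem MemLp.integrable_inner {f g : Ω → H} (hf : MemLp f 2 P) (hg : MemLp g 2 P) :
    Integrable (fun ω => ⟪f ω, g ω⟫) P := by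
  refine (L2.integrable_inner (𝕜 := ℝ) (hf.toLp f) (hg.toLp g)).congr ?_
  filter_upwards [hf.coeFn_toLp, hg.coeFn_toLp] with ω hfω hgω
  rw [hfω, hgω]

variable [CompleteSpace H] [IsFiniteMeasure P]

theorem integral_inner_eq_integral_norm_sq_of_condExp_eq (hm : m ≤ m0) {X g : Ω → H}
    (hX : MemLp X 2 P) (hg : MemLp g 2 P) (hgX : P[g|m] =ᵐ[P] X) :
    ∫ ω, ⟪X ω, g ω⟫ ∂P = ∫ ω, ‖X ω‖ ^ 2 ∂P := by
  have hXm : AEStronglyMeasurable[m] X P :=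
    stronglyMeasurable_condExp.aestronglyMeasurable.congr hgX
  have hpull : P[fun ω => ⟪X ω, g ω⟫|m] =ᵐ[P] fun ω => ⟪X ω, P[g|m] ω⟫ :=
    condExp_bilin_of_aestronglyMeasurable_left (innerSL ℝ) hXm (hX.integrable_inner hg)
      (hg.integrable one_le_two)
  rw [← integral_condExp hm]
  refine integral_congr_ae (hpull.trans ?_)
  filter_upwards [hgX] with ω hω
  rw [hω, real_inner_self_eq_norm_sq]

theorem integral_norm_sq_eq_add_of_condExp_eq (hm : m ≤ m0) {X g : Ω → H}
    (hX : MemLp X 2 P) (hg : MemLp g 2 P) (hgX : P[g|m] =ᵐ[P] X) :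
    ∫ ω, ‖g ω‖ ^ 2 ∂P = ∫ ω, ‖g ω - X ω‖ ^ 2 ∂P + ∫ ω, ‖X ω‖ ^ 2 ∂P := by
  have hsq {f : Ω → H} (hf : MemLp f 2 P) : Integrable (fun ω => ‖f ω‖ ^ 2) P :=
    (memLp_two_iff_integrable_sq_norm hf.1).1 hf
  have hpt : (fun ω => ‖g ω‖ ^ 2) =
      fun ω => ‖g ω - X ω‖ ^ 2 + 2 * ⟪X ω, g ω⟫ - ‖X ω‖ ^ 2 := by
    ext ω
    rw [norm_sub_sq_real, real_inner_comm]
    ring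
  have hdev : Integrable (fun ω => ‖g ω - X ω‖ ^ 2) P := hsq (hg.sub hX)
  have hinner : Integrable (fun ω => 2 * ⟪X ω, g ω⟫) P := (hX.integrable_inner hg).const_mul 2
  have hsum : Integrable (fun ω => ‖g ω - X ω‖ ^ 2 + 2 * ⟪X ω, g ω⟫) P := hdev.add hinner
  rw [hpt, integral_sub hsum (hsq hX), integral_add hdev hinner, integral_const_mul,
    integral_inner_eq_integral_norm_sq_of_condExp_eq hm hX hg hgX]
  ring

end MeasureTheory

section SGD

variable {H : Type*} [NormedAddCommGroup H] [InnerProductSpace ℝ H] [CompleteSpace H]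
  {Ω : Type*} {m0 : MeasurableSpace Ω} {P : Measure Ω} [IsProbabilityMeasure P]
  {f : H → ℝ} {f' : H → H} {L η σ2 : ℝ}

theorem integral_sgd_step_le (hL : 0 ≤ L) (hf : ∀ w, HasGradientAt f (f' w) w)
    (hf' : ∀ x y, ‖f' x - f' y‖ ≤ L * ‖x - y‖) {m : MeasurableSpace Ω} (hm : m ≤ m0)
    {w g : Ω → H} (hg : MemLp g 2 P) (hunbiased : P[g|m] =ᵐ[P] fun ω => f' (w ω))
    (hvar : P[fun ω => ‖g ω - f' (w ω)‖ ^ 2|m] ≤ᵐ[P] fun _ => σ2)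
    (hfw : Integrable (fun ω => f (w ω)) P) (hfw' : Integrable (fun ω => f (w ω - η • g ω)) P)
    (hf'w : Integrable (fun ω => ‖f' (w ω)‖ ^ 2) P) :
    ∫ ω, f (w ω - η • g ω) ∂P ≤
      ∫ ω, f (w ω) ∂P - (η - L * η ^ 2 / 2) * ∫ ω, ‖f' (w ω)‖ ^ 2 ∂P + L * η ^ 2 / 2 * σ2 := by
  have hX : MemLp (fun ω => f' (w ω)) 2 P :=
    (memLp_two_iff_integrable_sq_norm
      ((stronglyMeasurable_condExp.aestronglyMeasurable.congr hunbiased).mono hm)).2 hf'w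
  have hinner : Integrable (fun ω => ⟪f' (w ω), g ω⟫) P := hX.integrable_inner hg
  have hgsq : Integrable (fun ω => ‖g ω‖ ^ 2) P := (memLp_two_iff_integrable_sq_norm hg.1).1 hg
  have hpt : ∀ ω, f (w ω - η • g ω) ≤
      f (w ω) - η * ⟪f' (w ω), g ω⟫ + L / 2 * η ^ 2 * ‖g ω‖ ^ 2 := fun ω => by
    have := le_add_inner_add_sq_of_hasGradientAt hf hf' (w ω) (w ω - η • g ω)
    rwa [sub_sub_cancel_left, inner_neg_right, real_inner_smul_right, norm_neg, norm_smul,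
      mul_pow, Real.norm_eq_abs, sq_abs, ← sub_eq_add_neg, ← mul_assoc] at this
  have hvar_int : ∫ ω, ‖g ω - f' (w ω)‖ ^ 2 ∂P ≤ σ2 := by
    rw [← integral_condExp hm]
    simpa using integral_mono_ae integrable_condExp (integrable_const σ2) hvar
  have hdecomp := integral_norm_sq_eq_add_of_condExp_eq hm hX hg hunbiased
  have hcross := integral_inner_eq_integral_norm_sq_of_condExp_eq hm hX hg hunbiased
  have hlin : Integrable (fun ω => f (w ω) - η * ⟪f' (w ω), g ω⟫) P :=
    hfw.sub (hinner.const_mul η)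
  have hquad : Integrable (fun ω => L / 2 * η ^ 2 * ‖g ω‖ ^ 2) P := hgsq.const_mul _
  calc ∫ ω, f (w ω - η • g ω) ∂P
      ≤ ∫ ω, (f (w ω) - η * ⟪f' (w ω), g ω⟫ + L / 2 * η ^ 2 * ‖g ω‖ ^ 2) ∂P :=
        integral_mono hfw' (hlin.add hquad) hpt
    _ = ∫ ω, f (w ω) ∂P - η * ∫ ω, ⟪f' (w ω), g ω⟫ ∂P + L / 2 * η ^ 2 * ∫ ω, ‖g ω‖ ^ 2 ∂P := by
        rw [integral_add hlin hquad, integral_sub hfw (hinner.const_mul η), integral_const_mul,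
          integral_const_mul]
    _ ≤ _ := by
        rw [hcross, hdecomp]
        nlinarith [mul_le_mul_of_nonneg_left hvar_int (by positivity : 0 ≤ L / 2 * η ^ 2)]

theorem integral_sgd_iterate_le (hL : 0 ≤ L) (hf : ∀ w, HasGradientAt f (f' w) w)
    (hf' : ∀ x y, ‖f' x - f' y‖ ≤ L * ‖x - y‖) {𝓕 : ℕ → MeasurableSpace Ω}
    (h𝓕 : ∀ e, 𝓕 e ≤ m0) {W g : ℕ → Ω → H} (hW : ∀ e, W (e + 1) = fun ω => W e ω - η • g e ω)
    {n : ℕ} (hg : ∀ e < n, MemLp (g e) 2 P)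
    (hunbiased : ∀ e < n, P[g e|𝓕 e] =ᵐ[P] fun ω => f' (W e ω))
    (hvar : ∀ e < n, P[fun ω => ‖g e ω - f' (W e ω)‖ ^ 2|𝓕 e] ≤ᵐ[P] fun _ => σ2)
    (hfW : ∀ e ≤ n, Integrable (fun ω => f (W e ω)) P)
    (hf'W : ∀ e < n, Integrable (fun ω => ‖f' (W e ω)‖ ^ 2) P) :
    ∫ ω, f (W n ω) ∂P ≤ ∫ ω, f (W 0 ω) ∂P
      - (η - L * η ^ 2 / 2) * ∑ e ∈ Finset.range n, ∫ ω, ‖f' (W e ω)‖ ^ 2 ∂P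
      + n * (L * η ^ 2 / 2 * σ2) := by
  have hstep : ∀ e ∈ Finset.range n, ∫ ω, f (W (e + 1) ω) ∂P - ∫ ω, f (W e ω) ∂P ≤
      L * η ^ 2 / 2 * σ2 - (η - L * η ^ 2 / 2) * ∫ ω, ‖f' (W e ω)‖ ^ 2 ∂P := by
    intro e he
    rw [Finset.mem_range] at he
    have hfW' := hfW (e + 1) he
    rw [hW] at hfW' ⊢
    linarith [integral_sgd_step_le hL hf hf' (h𝓕 e) (hg e he) (hunbiased e he) (hvar e he)
      (hfW e he.le) hfW' (hf'W e he)]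
  have := Finset.sum_le_sum hstep
  rw [Finset.sum_range_sub (fun e => ∫ ω, f (W e ω) ∂P), Finset.sum_sub_distrib,
    Finset.sum_const, Finset.card_range, nsmul_eq_mul, ← Finset.mul_sum] at this
  linarith

end SGD

section Aggregation

variable {E V : Type*} [SeminormedAddCommGroup E] [SeminormedAddCommGroup V] [NormedSpace ℝ V]

theorem norm_sub_le_mul_sum_norm_of_eq_sub_smul [NormedSpace ℝ E] {η : ℝ} (hη : 0 ≤ η) {W g : ℕ → E}
    (hW : ∀ e, W (e + 1) = W e - η • g e) (n : ℕ) :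
    ‖W n - W 0‖ ≤ η * ∑ e ∈ Finset.range n, ‖g e‖ := by
  induction n with
  | zero => simp
  | succ n ih =>
    calc ‖W (n + 1) - W 0‖ = ‖(W n - W 0) - η • g n‖ := by rw [hW, sub_right_comm]
      _ ≤ ‖W n - W 0‖ + η * ‖g n‖ :=
        (norm_sub_le _ _).trans_eq (by rw [norm_smul, Real.norm_of_nonneg hη])
      _ ≤ η * ∑ e ∈ Finset.range (n + 1), ‖g e‖ := by
        rw [Finset.sum_range_succ, mul_add]
        exact add_le_add_left ih _

variable {ι : Type*} [Fintype ι] {F : ι → E → V} {L : ℝ} {q : ι → ℝ}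

theorem norm_sum_smul_sub_sum_smul_le (hF : ∀ j x y, ‖F j x - F j y‖ ≤ L * ‖x - y‖)
    (hq : ∀ j, 0 ≤ q j) (x y : ι → E) :
    ‖∑ j, q j • F j (x j) - ∑ j, q j • F j (y j)‖ ≤ L * ∑ j, q j * ‖x j - y j‖ := by
  rw [← Finset.sum_sub_distrib, Finset.mul_sum]
  refine (norm_sum_le _ _).trans (Finset.sum_le_sum fun j _ => ?_)
  rw [← smul_sub, norm_smul, Real.norm_of_nonneg (hq j), mul_left_comm]
  exact mul_le_mul_of_nonneg_left (hF j _ _) (hq j)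

theorem norm_sum_smul_sub_sum_smul_le_of_eq_sub_smul [NormedSpace ℝ E]
    (hF : ∀ j x y, ‖F j x - F j y‖ ≤ L * ‖x - y‖) (hL : 0 ≤ L) (hq : ∀ j, 0 ≤ q j) {η : ℝ}
    (hη : 0 ≤ η) {W g : ι → ℕ → E} (hW : ∀ j e, W j (e + 1) = W j e - η • g j e) (n : ℕ) :
    ‖∑ j, q j • F j (W j n) - ∑ j, q j • F j (W j 0)‖ ≤
      L * η * ∑ j, q j * ∑ e ∈ Finset.range n, ‖g j e‖ := by
  refine (norm_sum_smul_sub_sum_smul_le hF hq _ _).trans ?_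
  rw [mul_assoc, Finset.mul_sum _ _ η]
  refine mul_le_mul_of_nonneg_left (Finset.sum_le_sum fun j _ => ?_) hL
  rw [mul_left_comm]
  exact mul_le_mul_of_nonneg_left (norm_sub_le_mul_sum_norm_of_eq_sub_smul hη (hW j) n) (hq j)

end Aggregation

section WeightedSum

variable {Ω : Type*} {m0 : MeasurableSpace Ω} {P : Measure Ω} {ι : Type*} [Fintype ι]
  {u : ι → ℕ → Ω → ℝ} {n : ℕ}

theorem integrable_sum_mul_sum (q : ι → ℝ) (hu : ∀ j, ∀ e < n, Integrable (u j e) P) :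
    Integrable (fun ω => ∑ j, q j * ∑ e ∈ Finset.range n, u j e ω) P :=
  integrable_finsetSum _ fun j _ =>
    (integrable_finsetSum _ fun e he => hu j e (Finset.mem_range.1 he)).const_mul (q j)

theorem integral_sum_mul_sum_le {q : ι → ℝ} (hq : ∀ j, 0 ≤ q j) (hqsum : ∑ j, q j = 1)
    (hu : ∀ j, ∀ e < n, Integrable (u j e) P) {G : ℝ} (hG : ∀ j, ∀ e < n, ∫ ω, u j e ω ∂P ≤ G) :
    ∫ ω, ∑ j, q j * ∑ e ∈ Finset.range n, u j e ω ∂P ≤ n * G := by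
  have hsum : ∀ j, Integrable (fun ω => ∑ e ∈ Finset.range n, u j e ω) P := fun j =>
    integrable_finsetSum _ fun e he => hu j e (Finset.mem_range.1 he)
  rw [integral_finsetSum _ fun j _ => (hsum j).const_mul (q j)]
  calc ∑ j, ∫ ω, q j * ∑ e ∈ Finset.range n, u j e ω ∂P ≤ ∑ j, q j * (n * G) := by
        refine Finset.sum_le_sum fun j _ => ?_
        rw [integral_const_mul, integral_finsetSum _ fun e he => hu j e (Finset.mem_range.1 he)]
        refine mul_le_mul_of_nonneg_left ?_ (hq j)
        simpa using Finset.sum_le_sum fun e he => hG j e (Finset.mem_range.1 he)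
    _ = n * G := by rw [← Finset.sum_mul, hqsum, one_mul]

end WeightedSum

theorem fedproto_theorem1_one_round_deviation_general
    {H : Type*} [NormedAddCommGroup H] [InnerProductSpace ℝ H] [CompleteSpace H]
    {V : Type*} [NormedAddCommGroup V] [NormedSpace ℝ V]
    (m E : ℕ)
    (L₁ L₂ η σ2 G lam : ℝ)
    (hL₁ : 0 ≤ L₁) (hL₂ : 0 ≤ L₂) (hη : 0 ≤ η)
    (hlam : 0 ≤ lam)
    (F : Fin m → H → V)
    (hFlip : ∀ j : Fin m, ∀ x y : H, ‖F j x - F j y‖ ≤ L₂ * ‖x - y‖)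
    (q : Fin m → ℝ) (hq : ∀ j, 0 ≤ q j) (hqsum : ∑ j, q j = 1)
    (i : Fin m) (S : H → ℝ)
    (Li : H → V → ℝ) (hLi : ∀ w c, Li w c = S w + lam * ‖F i w - c‖)
    {Ω : Type*} {m0 : MeasurableSpace Ω} (P : Measure Ω) [IsProbabilityMeasure P]
    (𝓕 : Filtration ℕ m0)
    (W0 : Fin m → H) (g : Fin m → ℕ → Ω → H) (W : Fin m → ℕ → Ω → H)
    (hW0 : ∀ j, W j 0 = fun _ => W0 j)
    (hWstep : ∀ j, ∀ e, W j (e + 1) = fun ω => W j e ω - η • g j e ω)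
    (hgsq : ∀ j : Fin m, ∀ e < E, MemLp (g j e) 2 P)
    (hGbound : ∀ j : Fin m, ∀ e < E, (∫ ω, ‖g j e ω‖ ∂P) ≤ G)
    -- the current global prototype
    (c : V) (hc : c = ∑ j, q j • F j (W0 j))
    -- smoothness of client i's local objective `w ↦ Li w c`
    (f' : H → H)
    (hdiff : ∀ w, HasGradientAt (fun w => Li w c) (f' w) w)
    (hlip : ∀ x y, ‖f' x - f' y‖ ≤ L₁ * ‖x - y‖)
    -- unbiasedness and bounded conditional variance of client i's stochastic gradients
    (hunbiased : ∀ e < E, P[g i e | 𝓕 e] =ᵐ[P] fun ω => f' (W i e ω))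
    (hvar : ∀ e < E,
      P[(fun ω => ‖g i e ω - f' (W i e ω)‖ ^ 2) | 𝓕 e] ≤ᵐ[P] fun _ => σ2)
    -- the newly aggregated global prototype
    (c' : Ω → V) (hc' : ∀ ω, c' ω = ∑ j, q j • F j (W j E ω))
    -- integrability of all relevant functions
    (hLiint : ∀ e ≤ E, Integrable (fun ω => Li (W i e ω) c) P)
    (hgradint : ∀ e < E, Integrable (fun ω => ‖f' (W i e ω)‖ ^ 2) P)
    (hfinal : Integrable (fun ω => Li (W i E ω) (c' ω)) P) :
    (∫ ω, Li (W i E ω) (c' ω) ∂P) ≤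
      Li (W0 i) c
        - (η - L₁ * η ^ 2 / 2) * ∑ e ∈ Finset.range E, (∫ ω, ‖f' (W i e ω)‖ ^ 2 ∂P)
        + (L₁ * (E : ℝ) * η ^ 2 / 2) * σ2 + lam * L₂ * η * (E : ℝ) * G := by
  have hsgd := integral_sgd_iterate_le hL₁ hdiff hlip 𝓕.le (hWstep i) (hgsq i) hunbiased hvar
    hLiint hgradint
  simp only [hW0, integral_const, probReal_univ, one_smul] at hsgd
  set D := fun ω => ∑ j, q j * ∑ e ∈ Finset.range E, ‖g j e ω‖
  have hgnorm : ∀ j, ∀ e < E, Integrable (fun ω => ‖g j e ω‖) P := fun j e he =>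
    ((hgsq j e he).integrable one_le_two).norm
  have hprototype : ∀ ω, Li (W i E ω) (c' ω) ≤ Li (W i E ω) c + lam * L₂ * η * D ω := by
    intro ω
    have hdrift : ‖c' ω - c‖ ≤ L₂ * η * D ω := by
      simpa [hc', hc, hW0] using norm_sum_smul_sub_sum_smul_le_of_eq_sub_smul hFlip hL₂ hq hη
        (W := fun j e => W j e ω) (fun j e => congrFun (hWstep j e) ω) E
    rw [hLi, hLi]
    nlinarith [norm_sub_le_norm_sub_add_norm_sub (F i (W i E ω)) c (c' ω), norm_sub_rev c (c' ω),
      mul_le_mul_of_nonneg_left hdrift hlam]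
  have hDint : Integrable D P := integrable_sum_mul_sum q hgnorm
  have hD : ∫ ω, D ω ∂P ≤ E * G := integral_sum_mul_sum_le hq hqsum hgnorm hGbound
  calc ∫ ω, Li (W i E ω) (c' ω) ∂P
      ≤ ∫ ω, (Li (W i E ω) c + lam * L₂ * η * D ω) ∂P :=
        integral_mono hfinal ((hLiint E le_rfl).add (hDint.const_mul _)) hprototype
    _ = ∫ ω, Li (W i E ω) c ∂P + lam * L₂ * η * ∫ ω, D ω ∂P := by
        rw [integral_add (hLiint E le_rfl) (hDint.const_mul _), integral_const_mul]
    _ ≤ _ := by nlinarith [mul_le_mul_of_nonneg_left hD (by positivity : 0 ≤ lam * L₂ * η)]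

/-- Theorem 1 of FedProto (one-round deviation): for a client `i` whose local loss is
`L_i(w; c) = S_i(w) + λ‖F_i(w) − c‖`, after one communication round consisting of `E` local
SGD steps on every client followed by global prototype aggregation, the expected local loss
satisfies the stated one-round deviation bound. -/
theorem fedproto_theorem1_one_round_deviation
    {H : Type*} [NormedAddCommGroup H] [InnerProductSpace ℝ H] [CompleteSpace H]
    {V : Type*} [NormedAddCommGroup V] [NormedSpace ℝ V]
    (m E : ℕ) (hm : 1 ≤ m) (hE : 1 ≤ E)
    (L₁ L₂ η σ2 G lam : ℝ)
    (hL₁ : 0 ≤ L₁) (hL₂ : 0 ≤ L₂) (hη : 0 ≤ η) (hσ2 : 0 ≤ σ2) (hG : 0 ≤ G)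
    (hlam : 0 ≤ lam)
    (F : Fin m → H → V)
    (hFlip : ∀ j : Fin m, ∀ x y : H, ‖F j x - F j y‖ ≤ L₂ * ‖x - y‖)
    (q : Fin m → ℝ) (hq : ∀ j, 0 ≤ q j) (hqsum : ∑ j, q j = 1)
    (i : Fin m) (S : H → ℝ)
    (Li : H → V → ℝ) (hLi : ∀ w c, Li w c = S w + lam * ‖F i w - c‖)
    {Ω : Type*} {m0 : MeasurableSpace Ω} (P : Measure Ω) [IsProbabilityMeasure P]
    (𝓕 : Filtration ℕ m0)
    (W0 : Fin m → H) (g : Fin m → ℕ → Ω → H) (W : Fin m → ℕ → Ω → H)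
    (hW0 : ∀ j, W j 0 = fun _ => W0 j)
    (hWstep : ∀ j, ∀ e, W j (e + 1) = fun ω => W j e ω - η • g j e ω)
    (hgmeas : ∀ j : Fin m, ∀ e < E, StronglyMeasurable[𝓕 (e + 1)] (g j e))
    (hgsq : ∀ j : Fin m, ∀ e < E, MemLp (g j e) 2 P)
    (hGbound : ∀ j : Fin m, ∀ e < E, (∫ ω, ‖g j e ω‖ ∂P) ≤ G)
    -- the current global prototype
    (c : V) (hc : c = ∑ j, q j • F j (W0 j))
    -- smoothness of client i's local objective `w ↦ Li w c`
    (f' : H → H)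
    (hdiff : ∀ w, HasGradientAt (fun w => Li w c) (f' w) w)
    (hlip : ∀ x y, ‖f' x - f' y‖ ≤ L₁ * ‖x - y‖)
    -- unbiasedness and bounded conditional variance of client i's stochastic gradients
    (hunbiased : ∀ e < E, P[g i e | 𝓕 e] =ᵐ[P] fun ω => f' (W i e ω))
    (hvar : ∀ e < E,
      P[(fun ω => ‖g i e ω - f' (W i e ω)‖ ^ 2) | 𝓕 e] ≤ᵐ[P] fun _ => σ2)
    -- the newly aggregated global prototype
    (c' : Ω → V) (hc' : ∀ ω, c' ω = ∑ j, q j • F j (W j E ω))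
    -- integrability of all relevant functions
    (hLiint : ∀ e ≤ E, Integrable (fun ω => Li (W i e ω) c) P)
    (hgradint : ∀ e < E, Integrable (fun ω => ‖f' (W i e ω)‖ ^ 2) P)
    (hfinal : Integrable (fun ω => Li (W i E ω) (c' ω)) P) :
    (∫ ω, Li (W i E ω) (c' ω) ∂P) ≤
      Li (W0 i) c
        - (η - L₁ * η ^ 2 / 2) * ∑ e ∈ Finset.range E, (∫ ω, ‖f' (W i e ω)‖ ^ 2 ∂P)
        + (L₁ * (E : ℝ) * η ^ 2 / 2) * σ2 + lam * L₂ * η * (E : ℝ) * G :=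
  fedproto_theorem1_one_round_deviation_general m E L₁ L₂ η σ2 G lam hL₁ hL₂ hη hlam F hFlip q hq
    hqsum i S Li hLi P 𝓕 W0 g W hW0 hWstep hgsq hGbound c hc f' hdiff hlip hunbiased hvar c' hc'
    hLiint hgradint hfinal
end

section
/- (Corollary 1: one-round decrease of FedProto.) Let L₁ > 0, L₂ > 0, G > 0 be reals, E ≥ 1 a natural number, σ² ≥ 0, λ ≥ 0, and let s, S be reals with 0 < s ≤ S (s represents ‖∇L_{tE+1/2}‖² and S represents Σ_{e=1/2}^{E−1}‖∇L_{tE+e}‖²). Assume λ < s/(L₂·E·G) and 0 < η < 2·(S − λ·L₂·E·G) / (L₁·(S + E·σ²)). Then (η − L₁η²/2)·S − (L₁·E·η²/2)·σ² − λ·L₂·η·E·G > 0; consequently, for any reals ℓ, ℓ′ satisfying the one-round deviation bound ℓ′ ≤ ℓ − (η − L₁η²/2)·S + (L₁·E·η²/2)·σ² + λ·L₂·η·E·G (the conclusion of Theorem 1), one has ℓ′ < ℓ. -/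
/-!
The decrement of one round factors as `η * ((S - λ L₂ E G) - η L₁ (S + E σ²) / 2)`, and the
step-size condition on `η` says exactly that the second factor is positive.
-/

section OneRoundDecrement

variable {𝕜 : Type*} [Field 𝕜] [LinearOrder 𝕜] [IsStrictOrderedRing 𝕜]

theorem mul_sub_mul_div_two_pos {a d η : 𝕜} (hd : 0 < d) (hη0 : 0 < η)
    (hη : η < 2 * a / d) : 0 < η * (a - η * d / 2) := by
  have hηd : η * d < 2 * a := (lt_div_iff₀ hd).mp hη
  exact mul_pos hη0 (by linarith)

/-- The decrease of the local loss over one communication round guaranteed by Theorem 1. -/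
def oneRoundDecrement (L₁ L₂ G E σ2 lam S η : 𝕜) : 𝕜 :=
  (η - L₁ * η ^ 2 / 2) * S - (L₁ * E * η ^ 2 / 2) * σ2 - lam * L₂ * η * E * G

theorem oneRoundDecrement_eq (L₁ L₂ G E σ2 lam S η : 𝕜) :
    oneRoundDecrement L₁ L₂ G E σ2 lam S η =
      η * ((S - lam * L₂ * E * G) - η * (L₁ * (S + E * σ2)) / 2) := by
  unfold oneRoundDecrement
  ring

theorem oneRoundDecrement_pos {L₁ L₂ G E σ2 lam S η : 𝕜} (hL₁ : 0 < L₁) (hS : 0 < S)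
    (hE : 0 ≤ E) (hσ2 : 0 ≤ σ2) (hη0 : 0 < η)
    (hη : η < 2 * (S - lam * L₂ * E * G) / (L₁ * (S + E * σ2))) :
    0 < oneRoundDecrement L₁ L₂ G E σ2 lam S η := by
  rw [oneRoundDecrement_eq]
  have hS' : 0 < S + E * σ2 := add_pos_of_pos_of_nonneg hS (mul_nonneg hE hσ2)
  exact mul_sub_mul_div_two_pos (mul_pos hL₁ hS') hη0 hη

end OneRoundDecrement

theorem fedproto_corollary1_one_round_decrease_general
    (L₁ L₂ G : ℝ) (hL₁ : 0 < L₁)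
    (E : ℕ)
    (σ2 lam : ℝ) (hσ2 : 0 ≤ σ2)
    (s S : ℝ) (hs : 0 < s) (hsS : s ≤ S)
    (η : ℝ) (hη0 : 0 < η)
    (hη : η < 2 * (S - lam * L₂ * (E : ℝ) * G) / (L₁ * (S + (E : ℝ) * σ2))) :
    0 < (η - L₁ * η ^ 2 / 2) * S - (L₁ * (E : ℝ) * η ^ 2 / 2) * σ2
        - lam * L₂ * η * (E : ℝ) * G ∧
      ∀ ℓ ℓ' : ℝ,
        ℓ' ≤ ℓ - (η - L₁ * η ^ 2 / 2) * S + (L₁ * (E : ℝ) * η ^ 2 / 2) * σ2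
              + lam * L₂ * η * (E : ℝ) * G →
        ℓ' < ℓ := by
  have hdec : 0 < oneRoundDecrement L₁ L₂ G (E : ℝ) σ2 lam S η :=
    oneRoundDecrement_pos hL₁ (hs.trans_le hsS) E.cast_nonneg hσ2 hη0 hη
  refine ⟨hdec, fun ℓ ℓ' hbound => ?_⟩
  unfold oneRoundDecrement at hdec
  linarith

/-- Corollary 1 of FedProto (one-round decrease): if the importance weight `λ` and the
learning rate `η` satisfy `λ < s/(L₂ E G)` and
`η < 2(S − λ L₂ E G)/(L₁ (S + E σ²))`, then the per-round decrement is strictly positive,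
so any pair `ℓ, ℓ′` satisfying the one-round deviation bound of Theorem 1 has `ℓ′ < ℓ`. -/
theorem fedproto_corollary1_one_round_decrease
    (L₁ L₂ G : ℝ) (hL₁ : 0 < L₁) (hL₂ : 0 < L₂) (hG : 0 < G)
    (E : ℕ) (hE : 1 ≤ E)
    (σ2 lam : ℝ) (hσ2 : 0 ≤ σ2) (hlam : 0 ≤ lam)
    (s S : ℝ) (hs : 0 < s) (hsS : s ≤ S)
    (hlam' : lam < s / (L₂ * (E : ℝ) * G))
    (η : ℝ) (hη0 : 0 < η)
    (hη : η < 2 * (S - lam * L₂ * (E : ℝ) * G) / (L₁ * (S + (E : ℝ) * σ2))) :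
    0 < (η - L₁ * η ^ 2 / 2) * S - (L₁ * (E : ℝ) * η ^ 2 / 2) * σ2
        - lam * L₂ * η * (E : ℝ) * G ∧
      ∀ ℓ ℓ' : ℝ,
        ℓ' ≤ ℓ - (η - L₁ * η ^ 2 / 2) * S + (L₁ * (E : ℝ) * η ^ 2 / 2) * σ2
              + lam * L₂ * η * (E : ℝ) * G →
        ℓ' < ℓ :=
  fedproto_corollary1_one_round_decrease_general L₁ L₂ G hL₁ E σ2 lam hσ2 s S hs hsS η hη0 hη
end

section
/- (Theorem 2: non-convex convergence rate of FedProto.) Let L₁ > 0, L₂ > 0, G > 0, σ² ≥ 0 and ε > 0 be reals, let E ≥ 1 and T ≥ 1 be natural numbers, and let λ, η be reals with 0 < λ < ε/(L₂·G) and 0 < η < 2·(ε − λ·L₂·G)/(L₁·(ε + σ²)). Let ℓ₀, ℓ₁, …, ℓ_T and G₀, …, G_{T−1} be reals with G_t ≥ 0 for all t, and let ℓ* be a real with ℓ_t ≥ ℓ* for all t ≤ T; set Δ = ℓ₀ − ℓ*. Assume for every t < T the one-round bound ℓ_{t+1} ≤ ℓ_t − (η − L₁η²/2)·G_t + (L₁·E·η²/2)·σ²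 + λ·L₂·η·E·G, and assume T > 2·Δ / (E·ε·(2η − L₁η²) − E·η·(L₁·η·σ² + 2·λ·L₂·G)). Then (1/(T·E))·Σ_{t=0}^{T−1} G_t < ε. -/
/-! Summing the one-round bound telescopes: `(η - L₁η²/2) · Σₜ Gₜ ≤ Δ + T·b`, where `b` is the
per-round noise term. The step-size condition makes both `η - L₁η²/2` and the denominator `D`
in the bound on `T` positive, and `(η - L₁η²/2) · ε·T·E = T·D/2 + T·b`, so `T·D > 2Δ` forces
`Σₜ Gₜ < ε·T·E`. -/

open Finset

theorem mul_sum_le_sub_add_of_le_sub_mul_add {R : Type*} [Field R] [LinearOrder R]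
    [IsStrictOrderedRing R] {ℓ g : ℕ → R} {c b : R} {T : ℕ}
    (h : ∀ t < T, ℓ (t + 1) ≤ ℓ t - c * g t + b) :
    c * ∑ t ∈ range T, g t ≤ ℓ 0 - ℓ T + T * b :=
  calc c * ∑ t ∈ range T, g t = ∑ t ∈ range T, c * g t := mul_sum ..
    _ ≤ ∑ t ∈ range T, (ℓ t - ℓ (t + 1) + b) :=
      sum_le_sum fun t ht => by linarith [h t (mem_range.1 ht)]
    _ = ℓ 0 - ℓ T + T * b := by
      rw [sum_add_distrib, sum_range_sub', sum_const, card_range, nsmul_eq_mul]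

theorem step_margin_pos {L₁ a s ε η : ℝ} (hL₁ : 0 < L₁) (hεs : 0 < ε + s) (hη0 : 0 < η)
    (hη : η < 2 * (ε - a) / (L₁ * (ε + s))) :
    0 < 2 * η * (ε - a) - L₁ * η ^ 2 * (ε + s) := by
  have h := (lt_div_iff₀ (mul_pos hL₁ hεs)).1 hη
  nlinarith [mul_lt_mul_of_pos_left h hη0]

theorem sub_half_mul_sq_pos_of_step_margin_pos {L₁ a s ε η : ℝ} (ha : 0 ≤ a) (hs : 0 ≤ s)
    (hεs : 0 < ε + s) (hη0 : 0 < η) (hmargin : 0 < 2 * η * (ε - a) - L₁ * η ^ 2 * (ε + s)) :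
    0 < η - L₁ * η ^ 2 / 2 := by
  have h : 0 < (ε + s) * (2 * (η - L₁ * η ^ 2 / 2)) := by
    nlinarith [mul_nonneg hη0.le (add_nonneg ha hs)]
  linarith [pos_of_mul_pos_right h hεs.le]

theorem fedproto_theorem2_convergence_rate_general
    (L₁ L₂ G σ2 ε : ℝ) (hL₁ : 0 < L₁) (hL₂ : 0 < L₂) (hG : 0 < G)
    (hσ2 : 0 ≤ σ2) (hε : 0 < ε)
    (E T : ℕ) (hE : 1 ≤ E) (hT : 1 ≤ T)
    (lam η : ℝ) (hlam0 : 0 < lam)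
    (hη0 : 0 < η) (hη : η < 2 * (ε - lam * L₂ * G) / (L₁ * (ε + σ2)))
    (ℓ : ℕ → ℝ) (Gt : ℕ → ℝ)
    (ℓstar : ℝ) (hstar : ∀ t ≤ T, ℓstar ≤ ℓ t)
    (hbound : ∀ t < T,
      ℓ (t + 1) ≤ ℓ t - (η - L₁ * η ^ 2 / 2) * Gt t
        + (L₁ * (E : ℝ) * η ^ 2 / 2) * σ2 + lam * L₂ * η * (E : ℝ) * G)
    (hTbig : (T : ℝ) > 2 * (ℓ 0 - ℓstar) /
        ((E : ℝ) * ε * (2 * η - L₁ * η ^ 2)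
          - (E : ℝ) * η * (L₁ * η * σ2 + 2 * lam * L₂ * G))) :
    (1 / ((T : ℝ) * (E : ℝ))) * ∑ t ∈ Finset.range T, Gt t < ε := by
  set c := η - L₁ * η ^ 2 / 2
  set b := (L₁ * (E : ℝ) * η ^ 2 / 2) * σ2 + lam * L₂ * η * (E : ℝ) * G
  set D := (E : ℝ) * ε * (2 * η - L₁ * η ^ 2)
    - (E : ℝ) * η * (L₁ * η * σ2 + 2 * lam * L₂ * G)
  have hE' : (0 : ℝ) < E := by exact_mod_cast hE
  have hTE : (0 : ℝ) < T * E := mul_pos (by exact_mod_cast hT) hE'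
  have hεσ : 0 < ε + σ2 := by linarith
  have hmargin := step_margin_pos hL₁ hεσ hη0 hη
  have hc : 0 < c := sub_half_mul_sq_pos_of_step_margin_pos (by positivity) hσ2 hεσ hη0 hmargin
  have hD : 0 < D := by
    have : D = E * (2 * η * (ε - lam * L₂ * G) - L₁ * η ^ 2 * (ε + σ2)) := by ring
    rw [this]; positivity
  have hdescent : c * ∑ t ∈ range T, Gt t ≤ ℓ 0 - ℓstar + T * b := by
    have := mul_sum_le_sub_add_of_le_sub_mul_add (b := b) fun t ht => (hbound t ht).trans_eq (add_assoc ..)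
    linarith [hstar T le_rfl]
  have hrounds : 2 * (ℓ 0 - ℓstar) < T * D := by
    rw [gt_iff_lt, div_lt_iff₀ hD] at hTbig; linarith
  have hsum : ∑ t ∈ range T, Gt t < ε * (T * E) := by
    refine lt_of_mul_lt_mul_left ?_ hc.le
    calc c * ∑ t ∈ range T, Gt t ≤ ℓ 0 - ℓstar + T * b := hdescent
      _ < T * D / 2 + T * b := by linarith
      _ = c * (ε * (T * E)) := by ring
  rw [one_div, inv_mul_lt_iff₀ hTE, mul_comm]
  exact hsum

/-- Theorem 2 of FedProto (non-convex convergence rate): under the step-size and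
regularization-weight conditions, if the one-round deviation bound of Theorem 1 holds in
every communication round and the number of rounds `T` exceeds
`2Δ / (E ε (2η − L₁η²) − E η (L₁ η σ² + 2 λ L₂ G))` with `Δ = ℓ₀ − ℓ*`, then the average
over all rounds and local iterations of the expected squared gradient norms is below `ε`. -/
theorem fedproto_theorem2_convergence_rate
    (L₁ L₂ G σ2 ε : ℝ) (hL₁ : 0 < L₁) (hL₂ : 0 < L₂) (hG : 0 < G)
    (hσ2 : 0 ≤ σ2) (hε : 0 < ε)
    (E T : ℕ) (hE : 1 ≤ E) (hT : 1 ≤ T)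
    (lam η : ℝ) (hlam0 : 0 < lam) (hlam : lam < ε / (L₂ * G))
    (hη0 : 0 < η) (hη : η < 2 * (ε - lam * L₂ * G) / (L₁ * (ε + σ2)))
    (ℓ : ℕ → ℝ) (Gt : ℕ → ℝ) (hGt : ∀ t, 0 ≤ Gt t)
    (ℓstar : ℝ) (hstar : ∀ t ≤ T, ℓstar ≤ ℓ t)
    (hbound : ∀ t < T,
      ℓ (t + 1) ≤ ℓ t - (η - L₁ * η ^ 2 / 2) * Gt t
        + (L₁ * (E : ℝ) * η ^ 2 / 2) * σ2 + lam * L₂ * η * (E : ℝ) * G)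
    (hTbig : (T : ℝ) > 2 * (ℓ 0 - ℓstar) /
        ((E : ℝ) * ε * (2 * η - L₁ * η ^ 2)
          - (E : ℝ) * η * (L₁ * η * σ2 + 2 * lam * L₂ * G))) :
    (1 / ((T : ℝ) * (E : ℝ))) * ∑ t ∈ Finset.range T, Gt t < ε :=
  fedproto_theorem2_convergence_rate_general L₁ L₂ G σ2 ε hL₁ hL₂ hG hσ2 hε E T hE hT lam η hlam0
    hη0 hη ℓ Gt ℓstar hstar hbound hTbig
end
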